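/- Let Q be a simply-laced quiver. If Q contains a subquiver C which is an oriented cycle together with a vertex k not in C that is adjacent to exactly an odd number, greater than or equal to 3, of vertices of C, then Q is of infinite mutation type. -/

import Mathlib

open scoped Classical

/-- A quiver is encoded by its skew-symmetric exchange matrix. -/
def IsSkewQ {n : ℕ} (B : Matrix (Fin n) (Fin n) ℤ) : Prop :=
  ∀ i j, B j i = - B i j

/-- Fomin-Zelevinsky mutation of a skew-symmetric matrix at vertex `k`. -/
def mutate {n : ℕ} (B : Matrix (Fin n) (Fin n) ℤ) (k : Fin n) : Matrix (Fin n) (Fin n) ℤ :=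
  Matrix.of fun i j =>
    if i = k ∨ j = k then - B i j
    else B i j + Int.sign (B i k) * max (B i k * B k j) 0

def mutateList {n : ℕ} (B : Matrix (Fin n) (Fin n) ℤ) (l : List (Fin n)) :
    Matrix (Fin n) (Fin n) ℤ :=
  l.foldl mutate B

/-- `C` is obtained from `B` by a finite sequence of mutations followed by a
simultaneous relabeling of the index set. -/
def MutEquiv {n m : ℕ} (B : Matrix (Fin n) (Fin n) ℤ) (C : Matrix (Fin m) (Fin m) ℤ) : Prop :=
  ∃ (l : List (Fin n)) (σ : Fin m ≃ Fin n), C = (mutateList B l).submatrix ⇑σ ⇑σ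

/-- Finite mutation type: the mutation class is finite. -/
def FiniteMutationType {n : ℕ} (B : Matrix (Fin n) (Fin n) ℤ) : Prop :=
  {C : Matrix (Fin n) (Fin n) ℤ | MutEquiv B C}.Finite

/-- The underlying undirected graph of the quiver. -/
def quiverGraph {n : ℕ} (B : Matrix (Fin n) (Fin n) ℤ) : SimpleGraph (Fin n) where
  Adj i j := i ≠ j ∧ (B i j ≠ 0 ∨ B j i ≠ 0)
  symm := ⟨fun i j h => ⟨h.1.symm, h.2.symm⟩⟩
  loopless := ⟨fun i h => h.1 rfl⟩

def ConnectedQ {n : ℕ} (B : Matrix (Fin n) (Fin n) ℤ) : Prop :=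
  (quiverGraph B).Connected

def SimplyLaced {n : ℕ} (B : Matrix (Fin n) (Fin n) ℤ) : Prop :=
  ∀ i j, |B i j| ≤ 1

/-- The quiver (matrix) is a cycle: the vertices can be labeled by `ZMod m` so that
adjacency is exactly between consecutive labels. -/
def IsCycleMat {m : ℕ} (C : Matrix (Fin m) (Fin m) ℤ) : Prop :=
  3 ≤ m ∧ ∃ ρ : ZMod m ≃ Fin m, ∀ i j : ZMod m,
    C (ρ i) (ρ j) ≠ 0 ↔ (j = i + 1 ∨ i = j + 1)

/-- The quiver is an oriented cycle. -/
def IsOrientedCycleMat {m : ℕ} (C : Matrix (Fin m) (Fin m) ℤ) : Prop :=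
  3 ≤ m ∧ ∃ ρ : ZMod m ≃ Fin m,
    (∀ i j : ZMod m, C (ρ i) (ρ j) ≠ 0 ↔ (j = i + 1 ∨ i = j + 1)) ∧
    (∀ i : ZMod m, 0 < C (ρ i) (ρ (i + 1)))

def IsNonOrientedCycleMat {m : ℕ} (C : Matrix (Fin m) (Fin m) ℤ) : Prop :=
  IsCycleMat C ∧ ¬ IsOrientedCycleMat C

/-- A double edge: two vertices joined by an edge of weight 2. -/
def IsDoubleEdgeMat {m : ℕ} (C : Matrix (Fin m) (Fin m) ℤ) : Prop :=
  m = 2 ∧ ∃ i j : Fin m, i ≠ j ∧ (C i j = 2 ∨ C i j = -2)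

/-- The Dynkin tree D4: a center joined by single edges (arbitrarily oriented) to
three pairwise non-adjacent vertices. -/
def IsD4Mat {m : ℕ} (C : Matrix (Fin m) (Fin m) ℤ) : Prop :=
  m = 4 ∧ ∃ c : Fin m,
    (∀ i, i ≠ c → (C c i = 1 ∨ C c i = -1)) ∧
    (∀ i j, i ≠ c → j ≠ c → i ≠ j → C i j = 0)

/-- Two adjacent oriented simply-laced triangles sharing the edge `{c,d}`,
with `a`, `b` non-adjacent. -/
def IsTwoTrianglesMat {m : ℕ} (C : Matrix (Fin m) (Fin m) ℤ) : Prop :=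
  m = 4 ∧ ∃ a b c d : Fin m,
    a ≠ b ∧ a ≠ c ∧ a ≠ d ∧ b ≠ c ∧ b ≠ d ∧ c ≠ d ∧
    C a b = 0 ∧ C b a = 0 ∧
    C a c = 1 ∧ C c d = 1 ∧ C d a = 1 ∧ C b c = 1 ∧ C d b = 1

/-- Basic quivers: D4, two adjacent oriented triangles, or a simply-laced
oriented cycle with at least 4 vertices. -/
def IsBasicMat {m : ℕ} (C : Matrix (Fin m) (Fin m) ℤ) : Prop :=
  IsD4Mat C ∨ IsTwoTrianglesMat C ∨
    (4 ≤ m ∧ (∀ i j, |C i j| ≤ 1) ∧ IsOrientedCycleMat C)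

def HasBasicSubquiver {n : ℕ} (B : Matrix (Fin n) (Fin n) ℤ) : Prop :=
  ∃ (m : ℕ) (f : Fin m ↪ Fin n), IsBasicMat (B.submatrix ⇑f ⇑f)

/-- Build a skew-symmetric matrix from a list of weighted arrows. -/
def ofEdges (n : ℕ) (E : List (Fin n × Fin n × ℤ)) : Matrix (Fin n) (Fin n) ℤ :=
  Matrix.of fun i j =>
    E.foldl (fun acc e =>
      acc + (if e.1 = i ∧ e.2.1 = j then e.2.2 else 0)
          + (if e.1 = j ∧ e.2.1 = i then - e.2.2 else 0)) 0

def E6mat : Matrix (Fin 6) (Fin 6) ℤ :=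
  ofEdges 6 [(0,1,1),(1,2,1),(2,3,1),(3,4,1),(2,5,1)]

def E7mat : Matrix (Fin 7) (Fin 7) ℤ :=
  ofEdges 7 [(0,1,1),(1,2,1),(2,3,1),(3,4,1),(4,5,1),(2,6,1)]

def E8mat : Matrix (Fin 8) (Fin 8) ℤ :=
  ofEdges 8 [(0,1,1),(1,2,1),(2,3,1),(3,4,1),(4,5,1),(5,6,1),(2,7,1)]

def E6affMat : Matrix (Fin 7) (Fin 7) ℤ :=
  ofEdges 7 [(0,1,1),(1,2,1),(2,3,1),(3,4,1),(2,5,1),(5,6,1)]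

def E7affMat : Matrix (Fin 8) (Fin 8) ℤ :=
  ofEdges 8 [(0,1,1),(1,2,1),(2,3,1),(3,4,1),(4,5,1),(5,6,1),(3,7,1)]

def E8affMat : Matrix (Fin 9) (Fin 9) ℤ :=
  ofEdges 9 [(0,1,1),(1,2,1),(2,3,1),(3,4,1),(4,5,1),(5,6,1),(6,7,1),(2,8,1)]

/-- E6^(1,1): core b₁=0, b₂=1 (weight-2 arrow b₁→b₂), a₁=2, a₂=3, a₃=4 in oriented
triangles, with one extra path vertex attached at each aᵢ. -/
def E611Mat : Matrix (Fin 8) (Fin 8) ℤ :=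
  ofEdges 8 [(0,1,2),(2,0,1),(1,2,1),(3,0,1),(1,3,1),(4,0,1),(1,4,1),(2,5,1),(3,6,1),(4,7,1)]

def E711Mat : Matrix (Fin 9) (Fin 9) ℤ :=
  ofEdges 9 [(0,1,2),(2,0,1),(1,2,1),(3,0,1),(1,3,1),(4,0,1),(1,4,1),
             (2,5,1),(5,6,1),(4,7,1),(7,8,1)]

def E811Mat : Matrix (Fin 10) (Fin 10) ℤ :=
  ofEdges 10 [(0,1,2),(2,0,1),(1,2,1),(3,0,1),(1,3,1),(4,0,1),(1,4,1),
              (2,5,1),(4,6,1),(6,7,1),(7,8,1),(8,9,1)]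

/-- X6: c=0, a₁=1, a₂=2, b₁=3, b₂=4, d=5. -/
def X6mat : Matrix (Fin 6) (Fin 6) ℤ :=
  ofEdges 6 [(0,1,1),(2,0,1),(0,3,1),(4,0,1),(1,2,2),(3,4,2),(0,5,1)]

/-- X7: c=0, aᵢ=1,3,5, a′ᵢ=2,4,6. -/
def X7mat : Matrix (Fin 7) (Fin 7) ℤ :=
  ofEdges 7 [(0,1,1),(1,2,2),(2,0,1),(0,3,1),(3,4,2),(4,0,1),(0,5,1),(5,6,2),(6,0,1)]

/-- The kernel of B mod 2. -/
def Vbar0 {n : ℕ} (B : Matrix (Fin n) (Fin n) ℤ) : Submodule (ZMod 2) (Fin n → ZMod 2) :=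
  LinearMap.ker (Matrix.mulVecLin (B.map (fun x : ℤ => (x : ZMod 2))))

/-- A basic radical vector: a mod-2 radical vector whose support has exactly two
vertices or is a cycle. -/
def IsBasicRadical {n : ℕ} (B : Matrix (Fin n) (Fin n) ℤ) (u : Fin n → ZMod 2) : Prop :=
  u ∈ Vbar0 B ∧
    ({i | u i ≠ 0}.ncard = 2 ∨
      ∃ (m : ℕ) (f : Fin m ↪ Fin n),
        Set.range ⇑f = {i | u i ≠ 0} ∧ IsCycleMat (B.submatrix ⇑f ⇑f))

/-- The span of the basic radical vectors. -/
def Vbar00 {n : ℕ} (B : Matrix (Fin n) (Fin n) ℤ) : Submodule (ZMod 2) (Fin n → ZMod 2) :=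
  Submodule.span (ZMod 2) {u | IsBasicRadical B u}

/-!
Finite mutation classes have bounded entries, so it suffices to make some entry grow without
bound. The source of growth is a heavy triangle: an oriented triangle with weights at least `2`
keeps that shape under mutation at the vertex opposite its lightest arrow, while its total
weight strictly increases.

A heavy triangle is reached by induction on the length of the cycle. A cycle vertex that is
not joined to the hub `k` is removed by mutating at it, which keeps the cycle oriented and the
spokes unchanged. If every cycle vertex is joined to `k`, the cycle is odd, so two consecutive
spokes have the same orientation; mutating at both of them leaves a shorter wheel, or an arrow
of weight `3` in a triangle, which two more mutations turn into a heavy triangle. Triangular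
wheels are settled by an explicit mutation sequence.
-/

section Mutation

variable {n : ℕ}

lemma mutate_apply_of_ne (B : Matrix (Fin n) (Fin n) ℤ) {k i j : Fin n} (hi : i ≠ k)
    (hj : j ≠ k) : mutate B k i j = B i j + Int.sign (B i k) * max (B i k * B k j) 0 := by
  simp [mutate, hi, hj]

lemma mutate_apply_left (B : Matrix (Fin n) (Fin n) ℤ) (k j : Fin n) :
    mutate B k k j = -B k j := by
  simp [mutate]

lemma mutate_apply_right (B : Matrix (Fin n) (Fin n) ℤ) (i k : Fin n) :
    mutate B k i k = -B i k := by
  simp [mutate]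

lemma sign_neg_mul_max_mul_comm (p q : ℤ) :
    Int.sign (-q) * max (q * p) 0 = -(Int.sign p * max (p * q) 0) := by
  rw [mul_comm q p, Int.sign_neg]
  rcases le_or_gt (p * q) 0 with h | h
  · simp [max_eq_right h]
  · rcases pos_and_pos_or_neg_and_neg_of_mul_pos h with ⟨hp, hq⟩ | ⟨hp, hq⟩
    · simp [Int.sign_eq_one_of_pos hp, Int.sign_eq_one_of_pos hq]
    · simp [Int.sign_eq_neg_one_of_neg hp, Int.sign_eq_neg_one_of_neg hq]

lemma IsSkewQ.apply_self {B : Matrix (Fin n) (Fin n) ℤ} (hB : IsSkewQ B) (i : Fin n) :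
    B i i = 0 := by
  have := hB i i
  omega

lemma IsSkewQ.ne_of_apply_ne_zero {B : Matrix (Fin n) (Fin n) ℤ} (hB : IsSkewQ B) {i j : Fin n}
    (h : B i j ≠ 0) : i ≠ j := by
  rintro rfl
  exact h (hB.apply_self i)

lemma IsSkewQ.neg {B : Matrix (Fin n) (Fin n) ℤ} (hB : IsSkewQ B) : IsSkewQ (-B) := by
  intro i j
  simp [hB i j]

lemma IsSkewQ.mutate {B : Matrix (Fin n) (Fin n) ℤ} (hB : IsSkewQ B) (k : Fin n) :
    IsSkewQ (mutate B k) := by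
  intro i j
  by_cases hi : i = k
  · subst hi; rw [mutate_apply_right, mutate_apply_left, hB]
  by_cases hj : j = k
  · subst hj; rw [mutate_apply_right, mutate_apply_left, hB]
  rw [mutate_apply_of_ne B hj hi, mutate_apply_of_ne B hi hj, hB i j, hB k i, hB j k,
    neg_mul_neg, sign_neg_mul_max_mul_comm]
  ring

lemma mutateList_cons (B : Matrix (Fin n) (Fin n) ℤ) (k : Fin n) (l : List (Fin n)) :
    mutateList B (k :: l) = mutateList (mutate B k) l := rfl

lemma mutateList_append (B : Matrix (Fin n) (Fin n) ℤ) (l₁ l₂ : List (Fin n)) :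
    mutateList B (l₁ ++ l₂) = mutateList (mutateList B l₁) l₂ :=
  List.foldl_append

lemma IsSkewQ.mutateList {B : Matrix (Fin n) (Fin n) ℤ} (hB : IsSkewQ B) (l : List (Fin n)) :
    IsSkewQ (mutateList B l) := by
  induction l generalizing B with
  | nil => exact hB
  | cons k l ih => exact ih (hB.mutate k)

lemma mutate_submatrix {s : ℕ} (B : Matrix (Fin n) (Fin n) ℤ) {g : Fin s → Fin n}
    (hg : Function.Injective g) (k : Fin s) :
    mutate (B.submatrix g g) k = (mutate B (g k)).submatrix g g := by
  ext i j
  simp only [mutate, Matrix.submatrix_apply, Matrix.of_apply, hg.eq_iff]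

lemma mutateList_submatrix {s : ℕ} (B : Matrix (Fin n) (Fin n) ℤ) {g : Fin s → Fin n}
    (hg : Function.Injective g) (l : List (Fin s)) :
    mutateList (B.submatrix g g) l = (mutateList B (l.map g)).submatrix g g := by
  induction l generalizing B with
  | nil => rfl
  | cons k l ih => rw [mutateList_cons, mutate_submatrix B hg, ih]; rfl

lemma mutate_neg (B : Matrix (Fin n) (Fin n) ℤ) (k : Fin n) :
    mutate (-B) k = -mutate B k := by
  ext i j
  simp only [mutate, Matrix.of_apply, Matrix.neg_apply, neg_mul_neg, Int.sign_neg]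
  split_ifs <;> ring

lemma mutateList_neg (B : Matrix (Fin n) (Fin n) ℤ) (l : List (Fin n)) :
    mutateList (-B) l = -mutateList B l := by
  induction l generalizing B with
  | nil => rfl
  | cons k l ih => rw [mutateList_cons, mutateList_cons, mutate_neg, ih]

end Mutation

section Unbounded

variable {n : ℕ}

def MutationUnbounded (B : Matrix (Fin n) (Fin n) ℤ) : Prop :=
  ∀ N : ℤ, ∃ (l : List (Fin n)) (i j : Fin n), N ≤ mutateList B l i j

lemma MutationUnbounded.of_mutateList {B : Matrix (Fin n) (Fin n) ℤ} {l₀ : List (Fin n)}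
    (h : MutationUnbounded (mutateList B l₀)) : MutationUnbounded B := by
  intro N
  obtain ⟨l, i, j, hN⟩ := h N
  exact ⟨l₀ ++ l, i, j, by rwa [mutateList_append]⟩

lemma MutationUnbounded.of_mutate {B : Matrix (Fin n) (Fin n) ℤ} {k : Fin n}
    (h : MutationUnbounded (mutate B k)) : MutationUnbounded B :=
  MutationUnbounded.of_mutateList (l₀ := [k]) h

lemma MutationUnbounded.of_neg {B : Matrix (Fin n) (Fin n) ℤ} (hB : IsSkewQ B)
    (h : MutationUnbounded (-B)) : MutationUnbounded B := by
  intro N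
  obtain ⟨l, i, j, hN⟩ := h N
  refine ⟨l, j, i, ?_⟩
  rw [mutateList_neg, Matrix.neg_apply] at hN
  rw [hB.mutateList l i j]
  exact hN

lemma MutationUnbounded.of_submatrix {s : ℕ} {B : Matrix (Fin n) (Fin n) ℤ}
    {g : Fin s → Fin n} (hg : Function.Injective g) (h : MutationUnbounded (B.submatrix g g)) :
    MutationUnbounded B := by
  intro N
  obtain ⟨l, i, j, hN⟩ := h N
  rw [mutateList_submatrix B hg] at hN
  exact ⟨l.map g, g i, g j, hN⟩

lemma MutationUnbounded.not_finiteMutationType {B : Matrix (Fin n) (Fin n) ℤ}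
    (h : MutationUnbounded B) : ¬ FiniteMutationType B := by
  intro hfin
  obtain ⟨N, hN⟩ := ((hfin.prod (Set.finite_univ (α := Fin n × Fin n))).image
    fun p => p.1 p.2.1 p.2.2).bddAbove
  obtain ⟨l, i, j, hl⟩ := h (N + 1)
  have : mutateList B l i j ≤ N :=
    hN ⟨(mutateList B l, i, j), ⟨⟨l, Equiv.refl _, by simp⟩, trivial⟩, rfl⟩
  omega

end Unbounded

section HeavyTriangle

variable {n : ℕ} {B : Matrix (Fin n) (Fin n) ℤ} {x y z : Fin n}

def triangleWeight (B : Matrix (Fin n) (Fin n) ℤ) (x y z : Fin n) : ℤ :=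
  B x y + B y z + B z x

/-- The bound `7` excludes the Markov quiver `(2, 2, 2)`, whose mutation class is finite. -/
structure IsHeavyTriangle (B : Matrix (Fin n) (Fin n) ℤ) (x y z : Fin n) : Prop where
  two_le_left : 2 ≤ B x y
  two_le_mid : 2 ≤ B y z
  two_le_right : 2 ≤ B z x
  seven_le_weight : 7 ≤ triangleWeight B x y z

lemma IsHeavyTriangle.rotate (h : IsHeavyTriangle B x y z) : IsHeavyTriangle B y z x := by
  obtain ⟨hxy, hyz, hzx, hw⟩ := h
  exact ⟨hyz, hzx, hxy, by unfold triangleWeight at *; omega⟩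

lemma two_mul_add_one_le_mul {a b c : ℤ} (ha : 2 ≤ a) (hc : 2 ≤ c)
    (hba : b ≤ a) (hbc : b ≤ c) (hs : 7 ≤ a + b + c) : 2 * b + 1 ≤ c * a := by
  rcases le_or_gt b 2 with h | h
  · nlinarith [mul_nonneg (sub_nonneg.2 ha) (sub_nonneg.2 hc)]
  · nlinarith [mul_nonneg (sub_nonneg.2 hba) (sub_nonneg.2 hbc)]

/-- Mutating at the vertex opposite to the lightest arrow replaces that weight `b` by
`c * a - b > b`. -/
lemma IsHeavyTriangle.mutate_of_le (hB : IsSkewQ B) (h : IsHeavyTriangle B x y z)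
    (h₁ : B y z ≤ B x y) (h₂ : B y z ≤ B z x) :
    IsHeavyTriangle (mutate B x) x z y ∧
      triangleWeight B x y z < triangleWeight (mutate B x) x z y := by
  obtain ⟨hxy, hyz, hzx, hw⟩ := h
  have hyx : y ≠ x := (hB.ne_of_apply_ne_zero (by omega : B x y ≠ 0)).symm
  have hzx' : z ≠ x := hB.ne_of_apply_ne_zero (by omega : B z x ≠ 0)
  have e₁ : mutate B x x z = B z x := by rw [mutate_apply_left, hB z x, neg_neg]
  have e₂ : mutate B x z y = B z x * B x y - B y z := by
    rw [mutate_apply_of_ne B hzx' hyx, hB y z, Int.sign_eq_one_of_pos (by omega),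
      max_eq_left (by positivity)]
    ring
  have e₃ : mutate B x y x = B x y := by rw [mutate_apply_right, hB x y, neg_neg]
  have := two_mul_add_one_le_mul hxy hzx h₁ h₂ hw
  unfold triangleWeight at hw
  refine ⟨⟨?_, ?_, ?_, ?_⟩, ?_⟩ <;> simp only [triangleWeight, e₁, e₂, e₃] <;> omega

lemma IsHeavyTriangle.exists_mutate (hB : IsSkewQ B) (h : IsHeavyTriangle B x y z) :
    ∃ w x' y' z', IsHeavyTriangle (mutate B w) x' y' z' ∧
      triangleWeight B x y z < triangleWeight (mutate B w) x' y' z' := by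
  have hrot := h.rotate
  have hw₁ : triangleWeight B y z x = triangleWeight B x y z := by
    unfold triangleWeight; ring
  have hw₂ : triangleWeight B z x y = triangleWeight B x y z := by
    unfold triangleWeight; ring
  by_cases h₁ : B y z ≤ B x y ∧ B y z ≤ B z x
  · exact ⟨x, _, _, _, h.mutate_of_le hB h₁.1 h₁.2⟩
  by_cases h₂ : B z x ≤ B x y ∧ B z x ≤ B y z
  · rw [← hw₁]; exact ⟨y, _, _, _, hrot.mutate_of_le hB h₂.2 h₂.1⟩
  · rw [← hw₂]; exact ⟨z, _, _, _, hrot.rotate.mutate_of_le hB (by omega) (by omega)⟩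

lemma IsHeavyTriangle.exists_mutateList_le_weight (hB : IsSkewQ B)
    (h : IsHeavyTriangle B x y z) (N : ℕ) :
    ∃ l x' y' z', IsHeavyTriangle (mutateList B l) x' y' z' ∧
      N ≤ triangleWeight (mutateList B l) x' y' z' := by
  induction N with
  | zero => exact ⟨[], x, y, z, h, le_trans (by positivity) h.seven_le_weight⟩
  | succ N ih =>
    obtain ⟨l, x', y', z', hl, hN⟩ := ih
    obtain ⟨w, x'', y'', z'', hw, hlt⟩ := hl.exists_mutate (hB.mutateList l)
    refine ⟨l ++ [w], x'', y'', z'', ?_, ?_⟩ <;> rw [mutateList_append]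
    · exact hw
    · change _ ≤ triangleWeight (mutate (mutateList B l) w) x'' y'' z''
      push_cast
      omega

lemma IsHeavyTriangle.mutationUnbounded (hB : IsSkewQ B) (h : IsHeavyTriangle B x y z) :
    MutationUnbounded B := by
  intro N
  obtain ⟨l, x', y', z', -, hw⟩ := h.exists_mutateList_le_weight hB (3 * N).toNat
  have := Int.self_le_toNat (3 * N)
  unfold triangleWeight at hw
  by_cases h₁ : N ≤ mutateList B l x' y'
  · exact ⟨l, x', y', h₁⟩
  by_cases h₂ : N ≤ mutateList B l y' z'
  · exact ⟨l, y', z', h₂⟩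
  exact ⟨l, z', x', by omega⟩

end HeavyTriangle

section OrientedCycle

variable {n : ℕ} {B : Matrix (Fin n) (Fin n) ℤ} {m : ℕ} {v : ℕ → Fin n}

def cycleAdj (m a b : ℕ) : ℤ :=
  if b = a + 1 ∨ a + 1 = m ∧ b = 0 then 1
  else if a = b + 1 ∨ b + 1 = m ∧ a = 0 then -1 else 0

structure IsOrientedCycleOn (B : Matrix (Fin n) (Fin n) ℤ) (m : ℕ) (v : ℕ → Fin n) : Prop where
  three_le : 3 ≤ m
  injOn : Set.InjOn v (Set.Iio m)
  apply_eq : ∀ a < m, ∀ b < m, B (v a) (v b) = cycleAdj m a b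

/-- `(a + s) % m` for `a < m` and `s ≤ m`, in a form that `omega` understands. -/
def rotIdx (m s a : ℕ) : ℕ := if a + s < m then a + s else a + s - m

lemma rotIdx_lt {s a : ℕ} (hs : s ≤ m) (ha : a < m) : rotIdx m s a < m := by
  unfold rotIdx; split_ifs <;> omega

lemma rotIdx_zero {s : ℕ} (hs : s < m) : rotIdx m s 0 = s := by
  unfold rotIdx; split_ifs <;> omega

namespace IsOrientedCycleOn

lemma ne {a b : ℕ} (hC : IsOrientedCycleOn B m v) (ha : a < m) (hb : b < m) (hab : a ≠ b) :
    v a ≠ v b :=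
  fun h => hab (hC.injOn ha hb h)

lemma rotate (hC : IsOrientedCycleOn B m v) {s : ℕ} (hs : s < m) :
    IsOrientedCycleOn B m (fun a => v (rotIdx m s a)) where
  three_le := hC.three_le
  injOn a ha b hb h := by
    simp only [Set.mem_Iio] at ha hb
    have := hC.injOn (rotIdx_lt hs.le ha) (rotIdx_lt hs.le hb) h
    unfold rotIdx at this
    split_ifs at this <;> omega
  apply_eq a ha b hb := by
    rw [hC.apply_eq _ (rotIdx_lt hs.le ha) _ (rotIdx_lt hs.le hb)]
    unfold cycleAdj rotIdx
    split_ifs <;> omega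

lemma reverse_neg (hC : IsOrientedCycleOn B m v) :
    IsOrientedCycleOn (-B) m (fun a => v (m - 1 - a)) where
  three_le := hC.three_le
  injOn a ha b hb h := by
    simp only [Set.mem_Iio] at ha hb
    have := hC.injOn (show m - 1 - a < m by omega) (show m - 1 - b < m by omega) h
    omega
  apply_eq a ha b hb := by
    have := hC.three_le
    rw [Matrix.neg_apply, hC.apply_eq _ (by omega) _ (by omega)]
    unfold cycleAdj
    split_ifs <;> omega

/-- The new arrow `v (m - 1) → v 1` closes the shorter cycle. -/
lemma contract (hC : IsOrientedCycleOn B m v) (hm : 4 ≤ m) :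
    IsOrientedCycleOn (mutate B (v 0)) (m - 1) (fun a => v (a + 1)) where
  three_le := by omega
  injOn a ha b hb h := by
    simp only [Set.mem_Iio] at ha hb
    have := hC.injOn (show a + 1 < m by omega) (show b + 1 < m by omega) h
    omega
  apply_eq a ha b hb := by
    rw [mutate_apply_of_ne B (hC.ne (by omega) (by omega) (by omega))
      (hC.ne (by omega) (by omega) (by omega)), hC.apply_eq _ (by omega) _ (by omega),
      hC.apply_eq _ (by omega) _ (by omega), hC.apply_eq _ (by omega) _ (by omega)]
    unfold cycleAdj
    split_ifs <;> (try norm_num) <;> grind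

lemma mutate_apply_of_nonneg (hC : IsOrientedCycleOn B m v) {x : Fin n} (hx : x ≠ v 0)
    (hx₀ : 0 ≤ B x (v 0)) {a : ℕ} (ha₀ : 0 < a) (ha : a < m) :
    mutate B (v 0) x (v a) = B x (v a) + if a = 1 then B x (v 0) else 0 := by
  have := hC.three_le
  rw [mutate_apply_of_ne B hx (hC.ne ha (by omega) (by omega)), hC.apply_eq 0 (by omega) a ha]
  rcases hx₀.eq_or_lt with h₀ | h₀
  · simp [← h₀]
  · unfold cycleAdj
    split_ifs <;> first | omega | simp [Int.sign_eq_one_of_pos h₀, h₀.le]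

end IsOrientedCycleOn

end OrientedCycle

section OddWheel

variable {n : ℕ} {B : Matrix (Fin n) (Fin n) ℤ} {k : Fin n} {m : ℕ} {v : ℕ → Fin n}

def spokeCount (B : Matrix (Fin n) (Fin n) ℤ) (k : Fin n) (m : ℕ) (v : ℕ → Fin n) : ℕ :=
  ((Finset.range m).filter fun a => B k (v a) ≠ 0).card

lemma spokeCount_eq_iff : spokeCount B k m v = m ↔ ∀ a < m, B k (v a) ≠ 0 := by
  have := Finset.card_filter_eq_iff (s := Finset.range m) (p := fun a => B k (v a) ≠ 0)
  simpa only [spokeCount, Finset.card_range, Finset.mem_range] using this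

lemma spokeCount_rotate {s : ℕ} (hs : s < m) :
    spokeCount B k m (fun a => v (rotIdx m s a)) = spokeCount B k m v := by
  refine Finset.card_nbij' (rotIdx m s) (rotIdx m (m - s)) ?_ ?_ ?_ ?_ <;>
    intro a ha <;> simp only [Finset.mem_coe, Finset.mem_filter, Finset.mem_range] at ha ⊢
  · exact ⟨rotIdx_lt hs.le ha.1, ha.2⟩
  · refine ⟨rotIdx_lt (Nat.sub_le m s) ha.1, ?_⟩
    rw [show rotIdx m s (rotIdx m (m - s) a) = a by unfold rotIdx; split_ifs <;> omega]
    exact ha.2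
  · unfold rotIdx; split_ifs <;> omega
  · unfold rotIdx; split_ifs <;> omega

lemma spokeCount_reverse_neg :
    spokeCount (-B) k m (fun a => v (m - 1 - a)) = spokeCount B k m v := by
  refine Finset.card_nbij' (fun a => m - 1 - a) (fun a => m - 1 - a) ?_ ?_ ?_ ?_ <;>
    intro a ha <;>
    simp only [Finset.mem_coe, Finset.mem_filter, Finset.mem_range, Matrix.neg_apply,
      neg_ne_zero] at ha ⊢
  · exact ⟨by omega, ha.2⟩
  · refine ⟨by omega, ?_⟩
    rw [show m - 1 - (m - 1 - a) = a by omega]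
    exact ha.2
  · omega
  · omega

structure IsOddWheel (B : Matrix (Fin n) (Fin n) ℤ) (k : Fin n) (m : ℕ) (v : ℕ → Fin n) :
    Prop where
  cycle : IsOrientedCycleOn B m v
  ne_hub : ∀ a < m, v a ≠ k
  abs_spoke_le : ∀ a < m, |B k (v a)| ≤ 1
  odd_spokeCount : Odd (spokeCount B k m v)
  three_le_spokeCount : 3 ≤ spokeCount B k m v

namespace IsOddWheel

lemma rotate (hW : IsOddWheel B k m v) {s : ℕ} (hs : s < m) :
    IsOddWheel B k m (fun a => v (rotIdx m s a)) where
  cycle := hW.cycle.rotate hs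
  ne_hub a ha := hW.ne_hub _ (rotIdx_lt hs.le ha)
  abs_spoke_le a ha := hW.abs_spoke_le _ (rotIdx_lt hs.le ha)
  odd_spokeCount := by rw [spokeCount_rotate hs]; exact hW.odd_spokeCount
  three_le_spokeCount := by rw [spokeCount_rotate hs]; exact hW.three_le_spokeCount

lemma reverse_neg (hW : IsOddWheel B k m v) :
    IsOddWheel (-B) k m (fun a => v (m - 1 - a)) where
  cycle := hW.cycle.reverse_neg
  ne_hub a _ := hW.ne_hub _ (by have := hW.cycle.three_le; omega)
  abs_spoke_le a _ := by
    rw [Matrix.neg_apply, abs_neg]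
    exact hW.abs_spoke_le _ (by have := hW.cycle.three_le; omega)
  odd_spokeCount := by rw [spokeCount_reverse_neg]; exact hW.odd_spokeCount
  three_le_spokeCount := by rw [spokeCount_reverse_neg]; exact hW.three_le_spokeCount

lemma four_le_of_spoke_eq_zero (hW : IsOddWheel B k m v) (h₀ : B k (v 0) = 0) : 4 ≤ m := by
  have hsub : (Finset.range m).filter (fun a => B k (v a) ≠ 0) ⊆ (Finset.range m).erase 0 :=
    fun a ha => by
      simp only [Finset.mem_filter, Finset.mem_erase] at ha ⊢
      exact ⟨fun h => ha.2 (h ▸ h₀), ha.1⟩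
  have := Finset.card_le_card hsub
  rw [Finset.card_erase_of_mem (Finset.mem_range.2 (by have := hW.cycle.three_le; omega)),
    Finset.card_range] at this
  have := hW.three_le_spokeCount
  unfold spokeCount at this
  omega

lemma contract (hW : IsOddWheel B k m v) (h₀ : B k (v 0) = 0) :
    IsOddWheel (mutate B (v 0)) k (m - 1) (fun a => v (a + 1)) := by
  have hm := hW.four_le_of_spoke_eq_zero h₀
  have hspoke : ∀ a < m - 1, mutate B (v 0) k (v (a + 1)) = B k (v (a + 1)) := fun a ha => by
    rw [hW.cycle.mutate_apply_of_nonneg (hW.ne_hub 0 (by omega)).symm h₀.ge (by omega)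
      (by omega), h₀, ite_self, add_zero]
  have hcount : spokeCount (mutate B (v 0)) k (m - 1) (fun a => v (a + 1)) =
      spokeCount B k m v := by
    refine Finset.card_nbij' (· + 1) (· - 1) ?_ ?_ ?_ ?_ <;>
      intro a ha <;> simp only [Finset.mem_coe, Finset.mem_filter, Finset.mem_range] at ha ⊢
    · exact ⟨by omega, by rw [← hspoke a ha.1]; exact ha.2⟩
    · have ha₀ : a ≠ 0 := by rintro rfl; exact ha.2 h₀
      refine ⟨by omega, ?_⟩
      rw [hspoke _ (by omega), Nat.sub_add_cancel (Nat.pos_of_ne_zero ha₀)]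
      exact ha.2
    · omega
    · have ha₀ : a ≠ 0 := by rintro rfl; exact ha.2 h₀
      omega
  exact
    { cycle := hW.cycle.contract hm
      ne_hub := fun a ha => hW.ne_hub _ (by omega)
      abs_spoke_le := fun a ha => hspoke a ha ▸ hW.abs_spoke_le _ (by omega)
      odd_spokeCount := by rw [hcount]; exact hW.odd_spokeCount
      three_le_spokeCount := by rw [hcount]; exact hW.three_le_spokeCount }

end IsOddWheel

end OddWheel

section SmallQuivers

variable {n : ℕ} {B : Matrix (Fin n) (Fin n) ℤ}

lemma mutationUnbounded_of_weight_three (hB : IsSkewQ B) {x y z : Fin n} (hxy : B x y = 3)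
    (hyz : B y z = 1) (hxz : B x z = 1 ∨ B x z = -1) : MutationUnbounded B := by
  have hg : Function.Injective ![x, y, z] := by
    have := hB.ne_of_apply_ne_zero (i := x) (j := y) (by omega)
    have := hB.ne_of_apply_ne_zero (i := y) (j := z) (by omega)
    have := hB.ne_of_apply_ne_zero (i := x) (j := z) (by omega)
    intro i j h
    fin_cases i <;> fin_cases j <;> simp_all [eq_comm]
  have hsub : B.submatrix ![x, y, z] ![x, y, z] = !![0, 3, B x z; -3, 0, 1; -B x z, -1, 0] := by
    ext i j
    fin_cases i <;> fin_cases j <;>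
      simp [hB.apply_self, hxy, hyz, hB x y, hB y z, hB x z]
  refine MutationUnbounded.of_submatrix hg
    (hsub ▸ MutationUnbounded.of_mutateList (l₀ := [1, 0]) ?_)
  rcases hxz with hxz | hxz <;> rw [hxz] <;>
    exact IsHeavyTriangle.mutationUnbounded (x := 0) (y := 1) (z := 2)
      (by unfold IsSkewQ; decide) ⟨by decide, by decide, by decide, by decide⟩

lemma IsOrientedCycleOn.mutationUnbounded_of_three_spokes (hB : IsSkewQ B) {v : ℕ → Fin n}
    (hC : IsOrientedCycleOn B 3 v) {k : Fin n} (h₀ : B k (v 0) = 1) (h₁ : B k (v 1) = 1)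
    (h₂ : B k (v 2) = 1 ∨ B k (v 2) = -1) : MutationUnbounded B := by
  have e₀₁ : B (v 0) (v 1) = 1 := hC.apply_eq 0 (by norm_num) 1 (by norm_num)
  have e₁₂ : B (v 1) (v 2) = 1 := hC.apply_eq 1 (by norm_num) 2 (by norm_num)
  have e₂₀ : B (v 2) (v 0) = 1 := hC.apply_eq 2 (by norm_num) 0 (by norm_num)
  have hg : Function.Injective ![v 0, v 1, v 2, k] := by
    have := hB.ne_of_apply_ne_zero (i := k) (j := v 0) (by omega)
    have := hB.ne_of_apply_ne_zero (i := k) (j := v 1) (by omega)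
    have := hB.ne_of_apply_ne_zero (i := k) (j := v 2) (by omega)
    have := hB.ne_of_apply_ne_zero (i := v 0) (j := v 1) (by omega)
    have := hB.ne_of_apply_ne_zero (i := v 1) (j := v 2) (by omega)
    have := hB.ne_of_apply_ne_zero (i := v 2) (j := v 0) (by omega)
    intro i j h
    fin_cases i <;> fin_cases j <;> simp_all [eq_comm]
  have hsub : B.submatrix ![v 0, v 1, v 2, k] ![v 0, v 1, v 2, k] =
      !![0, 1, -1, -1; -1, 0, 1, -1; 1, -1, 0, -B k (v 2); 1, 1, B k (v 2), 0] := by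
    ext i j
    fin_cases i <;> fin_cases j <;>
      simp [hB.apply_self, e₀₁, e₁₂, e₂₀, h₀, h₁, hB (v 0) (v 1), hB (v 1) (v 2),
        hB (v 2) (v 0), hB k (v 0), hB k (v 1), hB k (v 2)]
  refine MutationUnbounded.of_submatrix hg (hsub ▸ ?_)
  rcases h₂ with h₂ | h₂ <;> rw [h₂]
  · refine MutationUnbounded.of_mutateList (l₀ := [0, 1, 3, 1]) ?_
    exact IsHeavyTriangle.mutationUnbounded (x := 1) (y := 3) (z := 2)
      (by unfold IsSkewQ; decide) ⟨by decide, by decide, by decide, by decide⟩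
  · refine MutationUnbounded.of_mutateList (l₀ := [0, 2, 3]) ?_
    exact IsHeavyTriangle.mutationUnbounded (x := 0) (y := 1) (z := 3)
      (by unfold IsSkewQ; decide) ⟨by decide, by decide, by decide, by decide⟩

end SmallQuivers

section WheelReduction

variable {n : ℕ} {B : Matrix (Fin n) (Fin n) ℤ} {k : Fin n} {m : ℕ} {v : ℕ → Fin n}

lemma exists_eq_rotIdx_one_of_odd (hm : Odd m) {s : ℕ → ℤ}
    (hs : ∀ a < m, s a = 1 ∨ s a = -1) :
    ∃ a < m, s a = s (rotIdx m 1 a) := by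
  by_contra! h
  have halt : ∀ a < m, s a = (-1) ^ a * s 0 := by
    intro a
    induction a with
    | zero => simp
    | succ a ih =>
      intro ha
      have hne := h a (by omega)
      rw [rotIdx, if_pos ha] at hne
      rw [pow_succ, mul_right_comm, ← ih (by omega)]
      rcases hs a (by omega) with h₁ | h₁ <;> rcases hs (a + 1) ha with h₂ | h₂ <;> omega
  obtain ⟨t, rfl⟩ := hm
  have hlast := h (2 * t) (by omega)
  rw [rotIdx, if_neg (by omega), show 2 * t + 1 - (2 * t + 1) = 0 by omega,
    halt (2 * t) (by omega), pow_mul, neg_one_sq, one_pow, one_mul] at hlast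
  exact hlast rfl

namespace IsOddWheel

lemma spoke_eq_one_or_neg_one (hW : IsOddWheel B k m v) (hfull : spokeCount B k m v = m)
    {a : ℕ} (ha : a < m) : B k (v a) = 1 ∨ B k (v a) = -1 := by
  have h₁ := spokeCount_eq_iff.1 hfull a ha
  have h₂ := abs_le.1 (hW.abs_spoke_le a ha)
  omega

/-- Reversing the cycle together with all arrows (`B ↦ -B`) turns two consecutive in-spokes
into out-spokes. -/
lemma exists_consecutive_out_spokes (hW : IsOddWheel B k m v)
    (hfull : spokeCount B k m v = m) :
    ∃ (B' : Matrix (Fin n) (Fin n) ℤ) (v' : ℕ → Fin n), (B' = B ∨ B' = -B) ∧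
      IsOddWheel B' k m v' ∧ spokeCount B' k m v' = m ∧ B' k (v' 0) = 1 ∧ B' k (v' 1) = 1 := by
  have hm := hW.cycle.three_le
  obtain ⟨a, ha, hpair⟩ := exists_eq_rotIdx_one_of_odd (hfull ▸ hW.odd_spokeCount)
    fun b hb => hW.spoke_eq_one_or_neg_one hfull hb
  have e₁ : rotIdx m a 1 = rotIdx m 1 a := by unfold rotIdx; split_ifs <;> omega
  rcases hW.spoke_eq_one_or_neg_one hfull ha with hpos | hneg
  · refine ⟨B, _, Or.inl rfl, hW.rotate ha, by rw [spokeCount_rotate ha, hfull], ?_, ?_⟩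
    · rw [rotIdx_zero ha, hpos]
    · rw [e₁, ← hpair, hpos]
  · have e₀' : rotIdx m a (m - 1 - rotIdx m (m - 2) 0) = rotIdx m 1 a := by
      unfold rotIdx; split_ifs <;> omega
    have e₁' : rotIdx m a (m - 1 - rotIdx m (m - 2) 1) = a := by
      unfold rotIdx; split_ifs <;> omega
    have hcount := (spokeCount_rotate (B := -B) (k := k)
      (v := fun b => v (rotIdx m a (m - 1 - b))) (by omega : m - 2 < m)).trans <|
      (spokeCount_reverse_neg (v := fun b => v (rotIdx m a b))).trans <|
      (spokeCount_rotate ha).trans hfull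
    refine ⟨-B, _, Or.inr rfl, (hW.rotate ha).reverse_neg.rotate (by omega : m - 2 < m), hcount,
      ?_, ?_⟩ <;> simp only [Matrix.neg_apply]
    · rw [e₀', ← hpair, hneg, neg_neg]
    · rw [e₁', hneg, neg_neg]

lemma mutate_mutate_spoke (hW : IsOddWheel B k m v) (hm : 4 ≤ m) (h₀ : B k (v 0) = 1)
    (h₁ : B k (v 1) = 1) {a : ℕ} (ha₁ : 1 < a) (ha : a < m) :
    mutate (mutate B (v 0)) (v 1) k (v a) = B k (v a) + if a = 2 then 2 else 0 := by
  have hk₁ : ∀ b, 0 < b → b < m →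
      mutate B (v 0) k (v b) = B k (v b) + if b = 1 then 1 else 0 := fun b hb₀ hb => by
    rw [hW.cycle.mutate_apply_of_nonneg (hW.ne_hub 0 (by omega)).symm (by omega) hb₀ hb, h₀]
  have := (hW.cycle.contract hm).mutate_apply_of_nonneg (x := k) (a := a - 1)
    (hW.ne_hub 1 (by omega)).symm (by rw [hk₁ 1 (by omega) (by omega)]; omega) (by omega)
    (by omega)
  simp only [Nat.sub_add_cancel (by omega : 1 ≤ a), Nat.zero_add] at this
  rw [this, hk₁ a (by omega) ha, hk₁ 1 (by omega) (by omega), h₁]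
  split_ifs <;> omega

/-- The two mutations turn the spoke at `v 2` into an arrow of weight `3` or `1`. -/
lemma mutationUnbounded_or_mutate_mutate (hB : IsSkewQ B) (hW : IsOddWheel B k m v)
    (hfull : spokeCount B k m v = m) (hm : 5 ≤ m) (h₀ : B k (v 0) = 1) (h₁ : B k (v 1) = 1) :
    MutationUnbounded B ∨
      IsOddWheel (mutate (mutate B (v 0)) (v 1)) k (m - 2) (fun a => v (a + 2)) := by
  have hC₂ := (hW.cycle.contract (by omega)).contract (by omega)
  have hk₂ := fun a => hW.mutate_mutate_spoke (by omega) h₀ h₁ (a := a)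
  rcases hW.spoke_eq_one_or_neg_one hfull (a := 2) (by omega) with h₂ | h₂
  · refine .inl (mutationUnbounded_of_weight_three ((hB.mutate (v 0)).mutate (v 1))
      (x := k) (y := v 2) (z := v 3) ?_ ?_ ?_).of_mutate.of_mutate
    · rw [hk₂ 2 (by omega) (by omega), h₂]; rfl
    · simpa [cycleAdj] using hC₂.apply_eq 0 (by omega) 1 (by omega)
    · rw [hk₂ 3 (by omega) (by omega), if_neg (by omega), add_zero]
      exact hW.spoke_eq_one_or_neg_one hfull (by omega)
  have hspoke : ∀ a < m - 2, mutate (mutate B (v 0)) (v 1) k (v (a + 2)) = 1 ∨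
      mutate (mutate B (v 0)) (v 1) k (v (a + 2)) = -1 := fun a ha => by
    rw [hk₂ (a + 2) (by omega) (by omega)]
    split_ifs with ha₂
    · obtain rfl : a = 0 := by omega
      left; simp [h₂]
    · rw [add_zero]; exact hW.spoke_eq_one_or_neg_one hfull (by omega)
  have hcount : spokeCount (mutate (mutate B (v 0)) (v 1)) k (m - 2) (fun a => v (a + 2)) =
      m - 2 :=
    spokeCount_eq_iff.2 fun a ha => by rcases hspoke a ha with h | h <;> omega
  obtain ⟨t, ht⟩ : Odd m := hfull ▸ hW.odd_spokeCount
  refine .inr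
    { cycle := (by omega : m - 1 - 1 = m - 2) ▸ hC₂
      ne_hub := fun a ha => hW.ne_hub _ (by omega)
      abs_spoke_le := fun a ha => abs_le.2 (by rcases hspoke a ha with h | h <;> omega)
      odd_spokeCount := by rw [hcount]; exact ⟨t - 1, by omega⟩
      three_le_spokeCount := by omega }

end IsOddWheel

end WheelReduction

theorem IsOddWheel.mutationUnbounded {n : ℕ} {B : Matrix (Fin n) (Fin n) ℤ} {k : Fin n} {m : ℕ}
    {v : ℕ → Fin n} (hB : IsSkewQ B) (hW : IsOddWheel B k m v) : MutationUnbounded B := by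
  induction m using Nat.strong_induction_on generalizing B v with
  | _ m ih =>
  by_cases hfull : spokeCount B k m v = m
  · obtain ⟨B', v', hB', hW', hfull', h₀, h₁⟩ := hW.exists_consecutive_out_spokes hfull
    have hB'skew : IsSkewQ B' := by rcases hB' with rfl | rfl; exacts [hB, hB.neg]
    suffices MutationUnbounded B' by rcases hB' with rfl | rfl; exacts [this, this.of_neg hB]
    obtain ⟨t, rfl⟩ : Odd m := hfull ▸ hW.odd_spokeCount
    obtain ht | ht : t = 1 ∨ 2 ≤ t := by have := hW.cycle.three_le; omega
    · subst ht
      exact hW'.cycle.mutationUnbounded_of_three_spokes hB'skew h₀ h₁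
        (hW'.spoke_eq_one_or_neg_one hfull' (by norm_num))
    · rcases hW'.mutationUnbounded_or_mutate_mutate hB'skew hfull' (by omega) h₀ h₁ with h | h
      · exact h
      · exact (ih _ (by omega) ((hB'skew.mutate _).mutate _) h).of_mutate.of_mutate
  · obtain ⟨a, ha, h₀⟩ : ∃ a < m, B k (v a) = 0 := by simpa [spokeCount_eq_iff] using hfull
    have hW₁ := (hW.rotate ha).contract (by rw [rotIdx_zero ha, h₀])
    exact (ih _ (by have := hW.cycle.three_le; omega) (hB.mutate _) hW₁).of_mutate

section CycleLabelling

variable {m : ℕ}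

lemma ZMod.natCast_eq_natCast_add_one_iff {a b : ℕ} (ha : a < m) (hb : b < m) :
    (b : ZMod m) = a + 1 ↔ b = a + 1 ∨ a + 1 = m ∧ b = 0 := by
  rw [← Nat.cast_succ, ZMod.natCast_eq_natCast_iff', Nat.mod_eq_of_lt hb]
  rcases (Nat.succ_le_of_lt ha).lt_or_eq with h | h
  · rw [Nat.mod_eq_of_lt h]; omega
  · rw [h, Nat.mod_self]; omega

lemma card_filter_range_natCast [NeZero m] (ρ : ZMod m ≃ Fin m) (P : Fin m → Prop)
    [DecidablePred P] :
    ((Finset.range m).filter fun a : ℕ => P (ρ a)).card = (Finset.univ.filter P).card := by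
  refine Finset.card_nbij (fun a : ℕ => ρ a) (fun a ha => ?_) (fun a ha b hb h => ?_)
    (fun x hx => ⟨(ρ.symm x).val, ?_, ?_⟩) <;>
    simp only [Finset.coe_filter, Finset.mem_range, Finset.mem_univ, true_and,
      Set.mem_ofPred_eq] at *
  · exact ha.2
  · rw [ρ.apply_eq_iff_eq, ZMod.natCast_eq_natCast_iff', Nat.mod_eq_of_lt ha.1,
      Nat.mod_eq_of_lt hb.1] at h
    exact h
  · exact ⟨ZMod.val_lt _, by simpa using hx⟩
  · simp

lemma IsOrientedCycleMat.exists_isOrientedCycleOn {n : ℕ} {B : Matrix (Fin n) (Fin n) ℤ}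
    (hB : IsSkewQ B) (hsl : SimplyLaced B) (f : Fin m ↪ Fin n)
    (hcyc : IsOrientedCycleMat (B.submatrix f f)) :
    ∃ ρ : ZMod m ≃ Fin m, IsOrientedCycleOn B m (fun a => f (ρ a)) := by
  obtain ⟨hm, ρ, hadj, hpos⟩ := hcyc
  have hsucc : ∀ i : ZMod m, B (f (ρ i)) (f (ρ (i + 1))) = 1 := fun i => by
    have := hpos i
    have := abs_le.1 (hsl (f (ρ i)) (f (ρ (i + 1))))
    simp only [Matrix.submatrix_apply] at *
    omega
  refine ⟨ρ, hm, fun a ha b hb h => ?_, fun a ha b hb => ?_⟩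
  · have := ρ.injective (f.injective h)
    rwa [ZMod.natCast_eq_natCast_iff', Nat.mod_eq_of_lt ha, Nat.mod_eq_of_lt hb] at this
  · unfold cycleAdj
    split_ifs with h₁ h₂
    · rw [← ZMod.natCast_eq_natCast_add_one_iff ha hb] at h₁
      rw [h₁, hsucc]
    · rw [← ZMod.natCast_eq_natCast_add_one_iff hb ha] at h₂
      rw [hB, h₂, hsucc]
    · by_contra hne
      rcases (hadj a b).1 hne with h | h
      · exact h₁ ((ZMod.natCast_eq_natCast_add_one_iff ha hb).1 h)
      · exact h₂ ((ZMod.natCast_eq_natCast_add_one_iff hb ha).1 h)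

end CycleLabelling

/-- a simply-laced quiver containing an oriented cycle `C` together
with a vertex `k` outside `C` adjacent to exactly an odd number `≥ 3` of vertices
of `C` is of infinite mutation type. -/
theorem stmt4 {n : ℕ} (B : Matrix (Fin n) (Fin n) ℤ) (hB : IsSkewQ B)
    (hsl : SimplyLaced B) {m : ℕ} (f : Fin m ↪ Fin n) (k : Fin n)
    (hk : k ∉ Set.range ⇑f)
    (hcyc : IsOrientedCycleMat (B.submatrix ⇑f ⇑f))
    (hodd : Odd (Finset.univ.filter (fun i : Fin m => B k (f i) ≠ 0)).card)
    (h3 : 3 ≤ (Finset.univ.filter (fun i : Fin m => B k (f i) ≠ 0)).card) :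
    ¬ FiniteMutationType B := by
  obtain ⟨ρ, hC⟩ := hcyc.exists_isOrientedCycleOn hB hsl f
  have : NeZero m := ⟨by have := hC.three_le; omega⟩
  have hcount : spokeCount B k m (fun a => f (ρ a)) =
      (Finset.univ.filter (fun i : Fin m => B k (f i) ≠ 0)).card :=
    card_filter_range_natCast ρ fun i => B k (f i) ≠ 0
  have hW : IsOddWheel B k m (fun a => f (ρ a)) :=
    ⟨hC, fun a _ h => hk ⟨_, h⟩, fun a _ => hsl k _, hcount ▸ hodd, hcount ▸ h3⟩
  exact (hW.mutationUnbounded hB).not_finiteMutationType
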